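/- arXiv:1408.0324 — 2 statements merged into one kernel-verified Lean document; each statement's English description precedes it below -/
import Mathlib

section
/- Let (Ω, F, μ) be a probability space and let U, W, ε_M, ε_T, ε_Y be square-integrable real random variables, each with mean 0 and variance 1, such that Cov(U, W) = ρ and all other pairs among {U, W, ε_M, ε_T, ε_Y} have covariance 0. Let a, b, c, d, ρ be real numbers with a² ≤ 1, d² ≤ 1, and b² + c² + 2bcρ ≤ 1 (so that M below has variance 1). Define M := b·U + c·W + √(1−b²−c²−2bcρ)·ε_M, T := a·U + √(1−a²)·ε_T, and Y := d·W + √(1−d²)·ε_Y. If 1 − (ab + acρ)² ≠ 0, then the adjusted regression coefficient of T satisfies β_T = (adρ·(1−b²−c²−bcρ) − abcd) / (1 − (ab + acρ)²). -/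
open MeasureTheory ProbabilityTheory

/-!
`β_T` only depends on the covariance matrix of `(T, M, Y)`, and covariance is bilinear and
insensitive to means. Expanding `T`, `M`, `Y` in the latent and noise variables gives
`Var T = Var M = 1` (the noise weights are exactly the square roots that complete the variances
to `1`), `Cov(M, T) = a (b + c ρ)`, `Cov(Y, T) = a d ρ` and `Cov(Y, M) = d (b ρ + c)`.
-/

/-- Covariance of two real random variables: `Cov(X,Y) = E[XY] - E[X] E[Y]`. -/
noncomputable def covar {Ω : Type*} [MeasurableSpace Ω] (μ : Measure Ω) (X Y : Ω → ℝ) : ℝ :=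
  (∫ ω, X ω * Y ω ∂μ) - (∫ ω, X ω ∂μ) * (∫ ω, Y ω ∂μ)

/-- The population OLS coefficient on `T` when regressing `Y` on `(T, M)`. -/
noncomputable def betaT {Ω : Type*} [MeasurableSpace Ω] (μ : Measure Ω) (Y T M : Ω → ℝ) : ℝ :=
  (covar μ Y T * variance M μ - covar μ Y M * covar μ M T) /
    (variance T μ * variance M μ - (covar μ M T) ^ 2)

section
variable {Ω : Type*} [MeasurableSpace Ω] {μ : Measure Ω} [IsProbabilityMeasure μ]

theorem covar_eq_covariance {X Y : Ω → ℝ} (hX : MemLp X 2 μ) (hY : MemLp Y 2 μ) :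
    covar μ X Y = cov[X, Y; μ] := by
  rw [covariance_eq_sub hX hY, covar]
  rfl

theorem betaT_eq_covariance {Y T M : Ω → ℝ} (hY : MemLp Y 2 μ) (hT : MemLp T 2 μ)
    (hM : MemLp M 2 μ) :
    betaT μ Y T M = (cov[Y, T; μ] * cov[M, M; μ] - cov[Y, M; μ] * cov[M, T; μ]) /
      (cov[T, T; μ] * cov[M, M; μ] - cov[M, T; μ] ^ 2) := by
  rw [betaT, covar_eq_covariance hY hT, covar_eq_covariance hY hM, covar_eq_covariance hM hT,
    covariance_self hT.aemeasurable, covariance_self hM.aemeasurable]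

end

theorem stmt2_general {Ω : Type*} [MeasurableSpace Ω] (μ : Measure Ω) [IsProbabilityMeasure μ]
    (U W εM εT εY : Ω → ℝ)
    (hU2 : MemLp U 2 μ) (hW2 : MemLp W 2 μ) (hεM2 : MemLp εM 2 μ)
    (hεT2 : MemLp εT 2 μ) (hεY2 : MemLp εY 2 μ)
    (hUv : variance U μ = 1) (hWv : variance W μ = 1) (hεMv : variance εM μ = 1)
    (hεTv : variance εT μ = 1)
    (a b c d ρ : ℝ)
    (hUW : covar μ U W = ρ)
    (hUεM : covar μ U εM = 0) (hUεT : covar μ U εT = 0) (hUεY : covar μ U εY = 0)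
    (hWεM : covar μ W εM = 0) (hWεT : covar μ W εT = 0) (hWεY : covar μ W εY = 0)
    (hεMεT : covar μ εM εT = 0) (hεMεY : covar μ εM εY = 0) (hεTεY : covar μ εT εY = 0)
    (ha : a ^ 2 ≤ 1) (hbc : b ^ 2 + c ^ 2 + 2 * b * c * ρ ≤ 1)
    (M T Y : Ω → ℝ)
    (hM : M = fun ω => b * U ω + c * W ω + Real.sqrt (1 - b ^ 2 - c ^ 2 - 2 * b * c * ρ) * εM ω)
    (hT : T = fun ω => a * U ω + Real.sqrt (1 - a ^ 2) * εT ω)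
    (hY : Y = fun ω => d * W ω + Real.sqrt (1 - d ^ 2) * εY ω) :
    betaT μ Y T M =
      (a * d * ρ * (1 - b ^ 2 - c ^ 2 - b * c * ρ) - a * b * c * d) /
        (1 - (a * b + a * c * ρ) ^ 2) := by
  have hsM := Real.mul_self_sqrt (show 0 ≤ 1 - b ^ 2 - c ^ 2 - 2 * b * c * ρ by linarith)
  have hsT := Real.mul_self_sqrt (show 0 ≤ 1 - a ^ 2 by linarith)
  replace hM : M = b • U + c • W + √(1 - b ^ 2 - c ^ 2 - 2 * b * c * ρ) • εM := hM
  replace hT : T = a • U + √(1 - a ^ 2) • εT := hT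
  replace hY : Y = d • W + √(1 - d ^ 2) • εY := hY
  have hM2 : MemLp M 2 μ := hM ▸ by apply_rules [MemLp.add, MemLp.const_smul]
  have hT2 : MemLp T 2 μ := hT ▸ by apply_rules [MemLp.add, MemLp.const_smul]
  have hY2 : MemLp Y 2 μ := hY ▸ by apply_rules [MemLp.add, MemLp.const_smul]
  simp (disch := assumption) only [covar_eq_covariance] at *
  simp (disch := exact MemLp.aemeasurable ‹_›) only [← covariance_self] at *
  have moments : cov[T, T; μ] = 1 ∧ cov[M, M; μ] = 1 ∧ cov[M, T; μ] = a * (b + c * ρ) ∧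
      cov[Y, T; μ] = a * d * ρ ∧ cov[Y, M; μ] = d * (b * ρ + c) := by
    subst hM hT hY
    refine ⟨?_, ?_, ?_, ?_, ?_⟩ <;>
    simp (disch := apply_rules [MemLp.add, MemLp.const_smul]) only [covariance_add_left,
      covariance_add_right, covariance_smul_left, covariance_smul_right, covariance_comm W U,
      covariance_comm εM U, covariance_comm εT U, covariance_comm εY U, covariance_comm εM W,
      covariance_comm εY W, covariance_comm εY εM, covariance_comm εY εT, hUW, hUεM, hUεT, hUεY,
      hWεM, hWεT, hWεY, hεMεT, hεMεY, hεTεY, hUv, hWv, hεMv, hεTv]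
    · linear_combination hsT
    · linear_combination hsM
    · ring
    · ring
    · ring
  obtain ⟨vT, vM, cMT, cYT, cYM⟩ := moments
  rw [betaT_eq_covariance hY2 hT2 hM2, vT, vM, cMT, cYT, cYM]
  congr 1 <;> ring

/-- Bias of the adjusted estimator in the M-structure with correlated latent causes. -/
theorem stmt2 {Ω : Type*} [MeasurableSpace Ω] (μ : Measure Ω) [IsProbabilityMeasure μ]
    (U W εM εT εY : Ω → ℝ)
    (hU2 : MemLp U 2 μ) (hW2 : MemLp W 2 μ) (hεM2 : MemLp εM 2 μ)
    (hεT2 : MemLp εT 2 μ) (hεY2 : MemLp εY 2 μ)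
    (hUm : ∫ ω, U ω ∂μ = 0) (hWm : ∫ ω, W ω ∂μ = 0) (hεMm : ∫ ω, εM ω ∂μ = 0)
    (hεTm : ∫ ω, εT ω ∂μ = 0) (hεYm : ∫ ω, εY ω ∂μ = 0)
    (hUv : variance U μ = 1) (hWv : variance W μ = 1) (hεMv : variance εM μ = 1)
    (hεTv : variance εT μ = 1) (hεYv : variance εY μ = 1)
    (a b c d ρ : ℝ)
    (hUW : covar μ U W = ρ)
    (hUεM : covar μ U εM = 0) (hUεT : covar μ U εT = 0) (hUεY : covar μ U εY = 0)
    (hWεM : covar μ W εM = 0) (hWεT : covar μ W εT = 0) (hWεY : covar μ W εY = 0)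
    (hεMεT : covar μ εM εT = 0) (hεMεY : covar μ εM εY = 0) (hεTεY : covar μ εT εY = 0)
    (ha : a ^ 2 ≤ 1) (hd : d ^ 2 ≤ 1) (hbc : b ^ 2 + c ^ 2 + 2 * b * c * ρ ≤ 1)
    (M T Y : Ω → ℝ)
    (hM : M = fun ω => b * U ω + c * W ω + Real.sqrt (1 - b ^ 2 - c ^ 2 - 2 * b * c * ρ) * εM ω)
    (hT : T = fun ω => a * U ω + Real.sqrt (1 - a ^ 2) * εT ω)
    (hY : Y = fun ω => d * W ω + Real.sqrt (1 - d ^ 2) * εY ω)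
    (hne : 1 - (a * b + a * c * ρ) ^ 2 ≠ 0) :
    betaT μ Y T M =
      (a * d * ρ * (1 - b ^ 2 - c ^ 2 - b * c * ρ) - a * b * c * d) /
        (1 - (a * b + a * c * ρ) ^ 2) :=
  stmt2_general μ U W εM εT εY hU2 hW2 hεM2 hεT2 hεY2 hUv hWv hεMv hεTv a b c d ρ hUW hUεM hUεT hUεY
    hWεM hWεT hWεY hεMεT hεMεY hεTεY ha hbc M T Y hM hT hY
end

section
/- Let U, W, ε_M, ε_T, ε_Y be independent standard Gaussian random variables on a probability space (Ω, F, μ). Let a, b, c, d, e, f, α be real numbers with b² + c² ≤ 1, a² + e² + 2abe ≤ 1, and d² + f² + 2cdf ≤ 1. Define M := b·U + c·W + √(1−b²−c²)·ε_M, T* := a·U + e·M + √(1−a²−e²−2abe)·ε_T, Y := d·W + f·M + √(1−d²−f²−2cdf)·ε_Y, and the binary treatment T := 1{T* ≥ α}. Then E[Y | T = 1] − E[Y | T = 0] = (cde + abf + ef)·η(α). -/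
open MeasureTheory ProbabilityTheory

/-- Standard normal CDF `Φ`. -/
noncomputable def gaussPhi (z : ℝ) : ℝ := ((gaussianReal 0 1) (Set.Iic z)).toReal

/-- Standard normal density `φ`. -/
noncomputable def gaussPdf (z : ℝ) : ℝ := gaussianPDFReal 0 1 z

/-- `η(z) = φ(z) / (Φ(z) Φ(−z))`. -/
noncomputable def etaFn (z : ℝ) : ℝ := gaussPdf z / (gaussPhi z * gaussPhi (-z))

/-- Conditional expectation of `X` given the event `A`: `E[X | A] = (∫_A X dμ) / μ(A)`. -/
noncomputable def condExpEvent {Ω : Type*} [MeasurableSpace Ω] (μ : Measure Ω)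
    (X : Ω → ℝ) (A : Set Ω) : ℝ :=
  (∫ ω in A, X ω ∂μ) / (μ A).toReal

/-!
Write `T* = ∑ uᵢ ξᵢ` and `Y = ∑ vᵢ ξᵢ` in terms of the independent standard Gaussians
`ξ = (U, W, ε_M, ε_T, ε_Y)`; the constraints on the coefficients say exactly that `∑ uᵢ² = 1`, so
`T*` is standard normal, and `Cov(Y, T*) = ∑ vᵢ uᵢ = cde + abf + ef`.
Since `(Y, T*)` is jointly Gaussian, `Y - Cov(Y, T*) T*` is independent of `T*`, which gives
`E[Y; T* ≥ α] = E[Y] Φ(-α) + Cov(Y, T*) φ(α)` from the truncated mean `E[Z; Z ≥ α] = φ(α)` of a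
standard normal `Z`. Dividing by `P(T* ≥ α) = Φ(-α)` and `P(T* < α) = Φ(α)` and using
`Φ(α) + Φ(-α) = 1`, the means cancel and the difference is `Cov(Y, T*) φ(α) / (Φ(α) Φ(-α))`.
-/

open Real Set Filter Topology

section StandardGaussian

lemma gaussianPDFReal_zero_one :
    gaussianPDFReal 0 1 = fun x ↦ (√(2 * π))⁻¹ * rexp (-(1 / 2) * x ^ 2) := by
  ext x
  simp only [gaussianPDFReal, NNReal.coe_one, mul_one, sub_zero]
  ring_nf

lemma hasDerivAt_neg_gaussianPDFReal (x : ℝ) :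
    HasDerivAt (fun y ↦ -gaussianPDFReal 0 1 y) (x * gaussianPDFReal 0 1 x) x := by
  simp only [gaussianPDFReal_zero_one, ← neg_mul]
  exact (((hasDerivAt_pow 2 x).const_mul _).exp.const_mul _).congr_deriv (by push_cast; ring)

lemma integrable_mul_gaussianPDFReal : Integrable (fun x ↦ x * gaussianPDFReal 0 1 x) := by
  simpa [gaussianPDFReal_zero_one, mul_left_comm] using
    (integrable_mul_exp_neg_mul_sq (b := 1 / 2) (by norm_num)).const_mul (√(2 * π))⁻¹

lemma tendsto_gaussianPDFReal_atTop : Tendsto (gaussianPDFReal 0 1) atTop (𝓝 0) := by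
  have h : Tendsto (fun x : ℝ ↦ -(1 / 2) * x ^ 2) atTop atBot :=
    (tendsto_pow_atTop two_ne_zero).const_mul_atTop_of_neg (by norm_num)
  rw [gaussianPDFReal_zero_one, ← mul_zero (√(2 * π))⁻¹]
  exact (tendsto_exp_atBot.comp h).const_mul _

lemma setIntegral_Ici_id_gaussianReal (α : ℝ) :
    ∫ x in Ici α, x ∂gaussianReal 0 1 = gaussPdf α := by
  have hsmul : ∀ x, gaussianPDFReal 0 1 x • (Ici α).indicator (fun x ↦ x) x
      = (Ici α).indicator (fun x ↦ x * gaussianPDFReal 0 1 x) x := fun x ↦ by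
    by_cases hx : x ∈ Ici α
    · simp only [indicator_of_mem hx, smul_eq_mul, mul_comm]
    · simp only [indicator_of_notMem hx, smul_zero]
  rw [← integral_indicator measurableSet_Ici, integral_gaussianReal_eq_integral_smul one_ne_zero]
  simp_rw [hsmul]
  rw [integral_indicator measurableSet_Ici, integral_Ici_eq_integral_Ioi,
    integral_Ioi_of_hasDerivAt_of_tendsto' (fun x _ ↦ hasDerivAt_neg_gaussianPDFReal x)
      integrable_mul_gaussianPDFReal.integrableOn tendsto_gaussianPDFReal_atTop.neg]
  simp [gaussPdf]

lemma gaussPhi_eq_measureReal (x : ℝ) : gaussPhi x = (gaussianReal 0 1).real (Iic x) := rfl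

lemma measureReal_Ici_gaussianReal (x : ℝ) :
    (gaussianReal 0 1).real (Ici x) = gaussPhi (-x) := by
  have hneg : (gaussianReal 0 1).map (fun x ↦ -x) = gaussianReal 0 1 := by
    simpa using gaussianReal_map_neg (μ := 0) (v := 1)
  rw [gaussPhi_eq_measureReal, ← hneg, map_measureReal_apply measurable_neg measurableSet_Iic]
  congr 1
  ext y
  simp

lemma gaussPhi_add_gaussPhi_neg (x : ℝ) : gaussPhi x + gaussPhi (-x) = 1 := by
  have : NullSingletonClass (gaussianReal 0 1) := nullSingletonClass_gaussianReal one_ne_zero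
  rw [← measureReal_Ici_gaussianReal, gaussPhi_eq_measureReal, ← measureReal_congr Ioi_ae_eq_Ici,
    ← compl_Iic, probReal_compl_eq_one_sub measurableSet_Iic]
  ring

lemma gaussPhi_pos (x : ℝ) : 0 < gaussPhi x := by
  refine ENNReal.toReal_pos (fun h ↦ ?_) (measure_ne_top _ _)
  simpa using gaussianReal_absolutelyContinuous' 0 one_ne_zero h

end StandardGaussian

section GaussianRegression

variable {Ω : Type*} [MeasurableSpace Ω] {μ : Measure Ω} [IsProbabilityMeasure μ] {X S : Ω → ℝ}

lemma setIntegral_setOf_le_of_hasGaussianLaw (hXS : HasGaussianLaw (fun ω ↦ (X ω, S ω)) μ)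
    (hSm : Measurable S) (hS : HasLaw S (gaussianReal 0 1) μ) (α : ℝ) :
    ∫ ω in {ω | α ≤ S ω}, X ω ∂μ = μ[X] * gaussPhi (-α) + cov[X, S; μ] * gaussPdf α := by
  set κ := cov[X, S; μ]
  set Z := fun ω ↦ X ω - κ * S ω
  have hA : MeasurableSet {ω | α ≤ S ω} := measurableSet_le measurable_const hSm
  have hX2 : MemLp X 2 μ := hXS.fst.memLp_two
  have hS2 : MemLp S 2 μ := hXS.snd.memLp_two
  have hZS : HasGaussianLaw (fun ω ↦ (Z ω, S ω)) μ :=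
    hXS.map_fun ((ContinuousLinearMap.fst ℝ ℝ ℝ - κ • ContinuousLinearMap.snd ℝ ℝ ℝ).prod
      (ContinuousLinearMap.snd ℝ ℝ ℝ))
  have hmean : μ[S] = 0 := by simp [hS.integral_eq]
  have hvar : Var[S; μ] = 1 := by simp [hS.variance_eq]
  have hindep : IndepFun Z S μ := hZS.indepFun_of_covariance_eq_zero <| by
    rw [covariance_fun_sub_left hX2 (hS2.const_mul κ) hS2, covariance_const_mul_left,
      covariance_self hS.aemeasurable, hvar, mul_one, sub_self]
  have hZ_A : ∫ ω in {ω | α ≤ S ω}, Z ω ∂μ = μ[X] * gaussPhi (-α) := by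
    have hprod := hindep.integral_comp_mul_comp (f := id) (g := (Ici α).indicator 1)
      hZS.fst.aemeasurable hS.aemeasurable aestronglyMeasurable_id
      (measurable_const.indicator measurableSet_Ici).aestronglyMeasurable
    have hZ_mean : μ[Z] = μ[X] := by
      rw [integral_sub (hX2.integrable one_le_two) ((hS2.integrable one_le_two).const_mul κ),
        integral_const_mul, hmean, mul_zero, sub_zero]
    have hprob : μ[(Ici α).indicator 1 ∘ S] = gaussPhi (-α) := by
      rw [hS.integral_comp (f := (Ici α).indicator 1)
          (measurable_const.indicator measurableSet_Ici).aestronglyMeasurable,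
        integral_indicator_one measurableSet_Ici, measureReal_Ici_gaussianReal]
    have hmul : id ∘ Z * (Ici α).indicator 1 ∘ S = {ω | α ≤ S ω}.indicator Z := by
      ext ω
      by_cases h : α ≤ S ω <;> simp [h]
    rw [← integral_indicator hA, ← hmul, hprod, hprob, Function.id_comp, hZ_mean]
  have hS_A : ∫ ω in {ω | α ≤ S ω}, S ω ∂μ = gaussPdf α := by
    rw [← setIntegral_Ici_id_gaussianReal, ← hS.map_eq,
      setIntegral_map measurableSet_Ici measurable_id'.aestronglyMeasurable hS.aemeasurable]
    rfl
  calc ∫ ω in {ω | α ≤ S ω}, X ω ∂μ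
      = ∫ ω in {ω | α ≤ S ω}, Z ω ∂μ + κ * ∫ ω in {ω | α ≤ S ω}, S ω ∂μ := by
        rw [← integral_const_mul, ← integral_add]
        · simp [Z]
        · exact ((hX2.integrable one_le_two).sub
            ((hS2.integrable one_le_two).const_mul κ)).integrableOn
        · exact ((hS2.integrable one_le_two).const_mul κ).integrableOn
    _ = μ[X] * gaussPhi (-α) + κ * gaussPdf α := by rw [hZ_A, hS_A]

theorem condExpEvent_sub_condExpEvent_compl_of_hasGaussianLaw
    (hXS : HasGaussianLaw (fun ω ↦ (X ω, S ω)) μ) (hSm : Measurable S)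
    (hS : HasLaw S (gaussianReal 0 1) μ) (α : ℝ) :
    condExpEvent μ X {ω | α ≤ S ω} - condExpEvent μ X {ω | α ≤ S ω}ᶜ
      = cov[X, S; μ] * etaFn α := by
  have hA : MeasurableSet {ω | α ≤ S ω} := measurableSet_le measurable_const hSm
  have hprob : μ.real {ω | α ≤ S ω} = gaussPhi (-α) := by
    rw [hS.measureReal_eq measurableSet_Ici, ← measureReal_Ici_gaussianReal]
    rfl
  have hprob_compl : μ.real {ω | α ≤ S ω}ᶜ = gaussPhi α := by
    rw [probReal_compl_eq_one_sub hA, hprob, ← gaussPhi_add_gaussPhi_neg α, add_sub_cancel_right]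
  have hint := setIntegral_setOf_le_of_hasGaussianLaw hXS hSm hS α
  have hint_compl :
      ∫ ω in {ω | α ≤ S ω}ᶜ, X ω ∂μ = μ[X] - ∫ ω in {ω | α ≤ S ω}, X ω ∂μ := by
    rw [← integral_add_compl hA hXS.fst.integrable, add_sub_cancel_left]
  have hΦ : gaussPhi α = 1 - gaussPhi (-α) := by linarith [gaussPhi_add_gaussPhi_neg α]
  have hpos : 0 < 1 - gaussPhi (-α) := hΦ ▸ gaussPhi_pos α
  have hpos_neg := gaussPhi_pos (-α)
  simp only [condExpEvent, ← measureReal_def, hprob, hprob_compl, hint_compl, hint, etaFn, hΦ]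
  field_simp
  ring

end GaussianRegression

section IndependentStandardGaussians

variable {Ω ι : Type*} [MeasurableSpace Ω] {μ : Measure Ω} [Fintype ι] {ξ : ι → Ω → ℝ}

lemma covariance_sum_mul_sum_mul_of_iIndepFun [IsProbabilityMeasure μ]
    (hξ : ∀ i, HasLaw (ξ i) (gaussianReal 0 1) μ) (hindep : iIndepFun ξ μ) (u v : ι → ℝ) :
    cov[fun ω ↦ ∑ i, u i * ξ i ω, fun ω ↦ ∑ i, v i * ξ i ω; μ] = ∑ i, u i * v i := by
  classical
  have hL2 : ∀ i, MemLp (ξ i) 2 μ := fun i ↦ (hξ i).hasGaussianLaw.memLp_two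
  have hcov : ∀ i j, cov[ξ i, ξ j; μ] = if i = j then 1 else 0 := by
    intro i j
    split_ifs with hij
    · rw [hij, covariance_self (hξ j).aemeasurable, (hξ j).variance_eq]
      simp
    · exact (hindep.indepFun hij).covariance_eq_zero (hL2 i) (hL2 j)
  rw [covariance_fun_sum_fun_sum (fun i ↦ (hL2 i).const_mul (u i))
    (fun j ↦ (hL2 j).const_mul (v j))]
  simp only [covariance_const_mul_left, covariance_const_mul_right, hcov, mul_ite, mul_one,
    mul_zero, Finset.sum_ite_eq, Finset.mem_univ, if_true]
  exact Finset.sum_congr rfl fun i _ ↦ mul_comm _ _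

lemma hasGaussianLaw_sum_mul_prodMk (hξ : ∀ i, HasLaw (ξ i) (gaussianReal 0 1) μ)
    (hindep : iIndepFun ξ μ) (u v : ι → ℝ) :
    HasGaussianLaw (fun ω ↦ (∑ i, u i * ξ i ω, ∑ i, v i * ξ i ω)) μ := by
  have hvec := hindep.hasGaussianLaw fun i ↦ (hξ i).hasGaussianLaw
  let L : (ι → ℝ) →L[ℝ] ℝ × ℝ :=
    (∑ i, u i • ContinuousLinearMap.proj i).prod (∑ i, v i • ContinuousLinearMap.proj i)
  refine (hvec.map_fun L).congr (ae_of_all _ fun ω ↦ ?_)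
  simp [L]

lemma hasLaw_sum_mul_of_iIndepFun [IsProbabilityMeasure μ]
    (hξ : ∀ i, HasLaw (ξ i) (gaussianReal 0 1) μ) (hindep : iIndepFun ξ μ) (u : ι → ℝ)
    (hu : ∑ i, u i ^ 2 = 1) :
    HasLaw (fun ω ↦ ∑ i, u i * ξ i ω) (gaussianReal 0 1) μ := by
  have hG := (hasGaussianLaw_sum_mul_prodMk hξ hindep u u).fst
  refine ⟨hG.aemeasurable, ?_⟩
  have hmean : μ[fun ω ↦ ∑ i, u i * ξ i ω] = 0 := by
    rw [integral_finsetSum _ fun i _ ↦ (hξ i).hasGaussianLaw.integrable.const_mul (u i)]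
    simp [integral_const_mul, (hξ _).integral_eq]
  have hvar : Var[fun ω ↦ ∑ i, u i * ξ i ω; μ] = 1 := by
    rw [← covariance_self hG.aemeasurable, covariance_sum_mul_sum_mul_of_iIndepFun hξ hindep]
    simpa [sq] using hu
  rw [hG.map_eq_gaussianReal, hmean, hvar, Real.toNNReal_one]

end IndependentStandardGaussians

lemma setOf_ite_le_eq_one {Ω : Type*} (S : Ω → ℝ) (α : ℝ) :
    {ω | (if α ≤ S ω then (1 : ℝ) else 0) = 1} = {ω | α ≤ S ω} := by
  ext ω
  simp only [mem_ofPred_eq]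
  split_ifs with h <;> simp [h]

lemma setOf_ite_le_eq_zero {Ω : Type*} (S : Ω → ℝ) (α : ℝ) :
    {ω | (if α ≤ S ω then (1 : ℝ) else 0) = 0} = {ω | α ≤ S ω}ᶜ := by
  ext ω
  simp only [mem_ofPred_eq, mem_compl_iff]
  split_ifs with h <;> simp [h]

theorem stmt15_general {Ω : Type*} [MeasurableSpace Ω] (μ : Measure Ω) [IsProbabilityMeasure μ]
    (U W εM εT εY : Ω → ℝ)
    (hmeas : ∀ i, Measurable (![U, W, εM, εT, εY] i))
    (hgauss : ∀ i, Measure.map (![U, W, εM, εT, εY] i) μ = gaussianReal 0 1)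
    (hindep : iIndepFun ![U, W, εM, εT, εY] μ)
    (a b c d e f α : ℝ)
    (hbc : b ^ 2 + c ^ 2 ≤ 1)
    (hae : a ^ 2 + e ^ 2 + 2 * a * b * e ≤ 1)
    (M Tstar Y T : Ω → ℝ)
    (hM : M = fun ω => b * U ω + c * W ω + Real.sqrt (1 - b ^ 2 - c ^ 2) * εM ω)
    (hTstar : Tstar = fun ω => a * U ω + e * M ω +
      Real.sqrt (1 - a ^ 2 - e ^ 2 - 2 * a * b * e) * εT ω)
    (hY : Y = fun ω => d * W ω + f * M ω +
      Real.sqrt (1 - d ^ 2 - f ^ 2 - 2 * c * d * f) * εY ω)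
    (hT : T = fun ω => if α ≤ Tstar ω then (1 : ℝ) else 0) :
    condExpEvent μ Y {ω | T ω = 1} - condExpEvent μ Y {ω | T ω = 0} =
      (c * d * e + a * b * f + e * f) * etaFn α := by
  subst hT
  set ξ := ![U, W, εM, εT, εY]
  have hξ : ∀ i, HasLaw (ξ i) (gaussianReal 0 1) μ := fun i ↦ ⟨(hmeas i).aemeasurable, hgauss i⟩
  set sM := √(1 - b ^ 2 - c ^ 2)
  set sT := √(1 - a ^ 2 - e ^ 2 - 2 * a * b * e)
  set sY := √(1 - d ^ 2 - f ^ 2 - 2 * c * d * f)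
  have hsM : sM ^ 2 = 1 - b ^ 2 - c ^ 2 := Real.sq_sqrt (by linarith)
  have hsT : sT ^ 2 = 1 - a ^ 2 - e ^ 2 - 2 * a * b * e := Real.sq_sqrt (by linarith)
  set u : Fin 5 → ℝ := ![a + e * b, e * c, e * sM, sT, 0]
  set v : Fin 5 → ℝ := ![b * f, d + c * f, f * sM, 0, sY]
  have hTstar_eq : Tstar = fun ω ↦ ∑ i, u i * ξ i ω := by
    ext ω
    simp only [hTstar, hM, u, ξ, Fin.sum_univ_five, Matrix.cons_val]
    ring
  have hY_eq : Y = fun ω ↦ ∑ i, v i * ξ i ω := by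
    ext ω
    simp only [hY, hM, v, ξ, Fin.sum_univ_five, Matrix.cons_val]
    ring
  have hu : ∑ i, u i ^ 2 = 1 := by
    simp only [u, Fin.sum_univ_five, Matrix.cons_val]
    linear_combination e ^ 2 * hsM + hsT
  have hvu : ∑ i, v i * u i = c * d * e + a * b * f + e * f := by
    simp only [u, v, Fin.sum_univ_five, Matrix.cons_val]
    linear_combination e * f * hsM
  rw [setOf_ite_le_eq_one, setOf_ite_le_eq_zero, hY_eq, hTstar_eq,
    condExpEvent_sub_condExpEvent_compl_of_hasGaussianLaw
      (hasGaussianLaw_sum_mul_prodMk hξ hindep v u) (by fun_prop)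
      (hasLaw_sum_mul_of_iIndepFun hξ hindep u hu),
    covariance_sum_mul_sum_mul_of_iIndepFun hξ hindep, hvu]

/-- Unadjusted difference-in-means bias in the Butterfly-structure with a binary
treatment: `E[Y | T = 1] − E[Y | T = 0] = (cde + abf + ef) η(α)`. -/
theorem stmt15 {Ω : Type*} [MeasurableSpace Ω] (μ : Measure Ω) [IsProbabilityMeasure μ]
    (U W εM εT εY : Ω → ℝ)
    (hmeas : ∀ i, Measurable (![U, W, εM, εT, εY] i))
    (hgauss : ∀ i, Measure.map (![U, W, εM, εT, εY] i) μ = gaussianReal 0 1)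
    (hindep : iIndepFun ![U, W, εM, εT, εY] μ)
    (a b c d e f α : ℝ)
    (hbc : b ^ 2 + c ^ 2 ≤ 1)
    (hae : a ^ 2 + e ^ 2 + 2 * a * b * e ≤ 1)
    (hdf : d ^ 2 + f ^ 2 + 2 * c * d * f ≤ 1)
    (M Tstar Y T : Ω → ℝ)
    (hM : M = fun ω => b * U ω + c * W ω + Real.sqrt (1 - b ^ 2 - c ^ 2) * εM ω)
    (hTstar : Tstar = fun ω => a * U ω + e * M ω +
      Real.sqrt (1 - a ^ 2 - e ^ 2 - 2 * a * b * e) * εT ω)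
    (hY : Y = fun ω => d * W ω + f * M ω +
      Real.sqrt (1 - d ^ 2 - f ^ 2 - 2 * c * d * f) * εY ω)
    (hT : T = fun ω => if α ≤ Tstar ω then (1 : ℝ) else 0) :
    condExpEvent μ Y {ω | T ω = 1} - condExpEvent μ Y {ω | T ω = 0} =
      (c * d * e + a * b * f + e * f) * etaFn α :=
  stmt15_general μ U W εM εT εY hmeas hgauss hindep a b c d e f α hbc hae M Tstar Y T hM hTstar hY
    hT
end
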